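/- If the matrix [E B] : Matrix (Fin n) (Fin (n+m)) ℂ has rank less than n, then the block Toeplitz matrix 𝒞(E,A,B) of Theorem 5 (with block rows stacking the pattern (−A, B; E, 0) shifted along the block columns, ending with a final column block containing B) does not have full row rank n². Equivalently: a nonzero left null vector v of [E B] yields a nonzero left null vector of 𝒞(E,A,B) supported on the last block row. -/

import Mathlib

/-!
A nonzero left null vector `v` of `[E B]` annihilates every column of the last block row of
`𝒞(E,A,B)`: those columns are columns of `E` (in the last shift), of `B` (in the final column
block) or zero, since `-A` only occurs in the block rows `i < n - 1`. Placing `v` in the last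
block row therefore gives a nonzero left null vector of `𝒞(E,A,B)`, so its rows are dependent.
-/

open Matrix

theorem Function.uncurry_single_ne_zero {ι κ M : Type*} [DecidableEq ι] [Zero M] {i : ι}
    {v : κ → M} (hv : v ≠ 0) : Function.uncurry (Pi.single i v) ≠ 0 := by
  obtain ⟨a, ha⟩ := Function.ne_iff.mp hv
  exact Function.ne_iff.mpr ⟨(i, a), by simpa using ha⟩

namespace Matrix

variable {ι κ l : Type*}

theorem rank_lt_card_height_iff_exists_vecMul_eq_zero {K : Type*} [Field K] [Fintype ι]
    [Fintype l] (M : Matrix ι l K) : M.rank < Fintype.card ι ↔ ∃ v ≠ 0, v ᵥ* M = 0 := by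
  have hrow : M.rank = Fintype.card ι ↔ LinearIndependent K M.row := by
    rw [rank_eq_finrank_span_row, linearIndependent_iff_card_eq_finrank_span, Set.finrank,
      eq_comm]
  rw [(rank_le_card_height M).lt_iff_ne, Ne, hrow, Fintype.not_linearIndependent_iff]
  simp only [vecMul_eq_sum, Function.ne_iff, Pi.zero_apply]
  exact exists_congr fun _ => and_comm

theorem uncurry_single_vecMul {R : Type*} [CommSemiring R] [Fintype ι] [Fintype κ]
    [DecidableEq ι] (i : ι) (v : κ → R) (M : Matrix (ι × κ) l R) :
    Function.uncurry (Pi.single i v) ᵥ* M = v ᵥ* M.submatrix (Prod.mk i) id := by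
  ext c
  simp only [vecMul, dotProduct, Fintype.sum_prod_type, Function.uncurry_apply_pair,
    submatrix_apply, id]
  rw [Finset.sum_eq_single i]
  · simp
  · intro j _ hj
    simp [hj]
  · simp

end Matrix

/-- If `[E B]` has rank `< n`, then the block Toeplitz controllability matrix
`𝒞(E,A,B)` is not of full row rank `n²`; indeed there is a nonzero left null
vector supported on the last block row. -/
theorem toeplitz_rank_deficient_of_EB_rank_deficient (n m : ℕ)
    (E A : Matrix (Fin n) (Fin n) ℂ) (B : Matrix (Fin n) (Fin m) ℂ)
    (C : Matrix (Fin n × Fin n) ((Fin (n - 1) × (Fin n ⊕ Fin m)) ⊕ Fin m) ℂ)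
    (hC₁ : ∀ (i a : Fin n) (j : Fin (n - 1)) (b : Fin n),
      C (i, a) (Sum.inl (j, Sum.inl b)) =
        if (i : ℕ) = (j : ℕ) then -A a b
        else if (i : ℕ) = (j : ℕ) + 1 then E a b else 0)
    (hC₂ : ∀ (i a : Fin n) (j : Fin (n - 1)) (c : Fin m),
      C (i, a) (Sum.inl (j, Sum.inr c)) = if (i : ℕ) = (j : ℕ) then B a c else 0)
    (hC₃ : ∀ (i a : Fin n) (c : Fin m),
      C (i, a) (Sum.inr c) = if (i : ℕ) = n - 1 then B a c else 0)
    (h : (Matrix.fromCols E B).rank < n) :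
    C.rank ≠ n * n ∧
      ∃ w : Fin n × Fin n → ℂ, w ≠ 0 ∧ Matrix.vecMul w C = 0 ∧
        ∀ p : Fin n × Fin n, (p.1 : ℕ) ≠ n - 1 → w p = 0 := by
  obtain ⟨v, hv, hvEB⟩ :=
    (rank_lt_card_height_iff_exists_vecMul_eq_zero (fromCols E B)).1 (by simpa using h)
  rw [vecMul_fromCols, ← Sum.elim_zero_zero, Sum.elim_eq_iff] at hvEB
  obtain ⟨hvE, hvB⟩ := hvEB
  let last : Fin n := ⟨n - 1, by omega⟩
  have hw : Function.uncurry (Pi.single last v) ≠ 0 := Function.uncurry_single_ne_zero hv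
  have hwC : Function.uncurry (Pi.single last v) ᵥ* C = 0 := by
    rw [uncurry_single_vecMul]
    ext ((⟨j, b | c⟩) | c)
    · have hj : n - 1 ≠ j := by omega
      by_cases hj' : n - 1 = j + 1
      · simpa [vecMul, dotProduct, hC₁, last, hj, hj'] using congrFun hvE b
      · simp [vecMul, dotProduct, hC₁, last, hj, hj']
    · have hj : n - 1 ≠ j := by omega
      simp [vecMul, dotProduct, hC₂, last, hj]
    · simpa [vecMul, dotProduct, hC₃, last] using congrFun hvB c
  refine ⟨fun hC => ?_, _, hw, hwC, fun ⟨i, a⟩ hi => ?_⟩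
  · have := (rank_lt_card_height_iff_exists_vecMul_eq_zero C).2 ⟨_, hw, hwC⟩
    simp [hC] at this
  · have : i ≠ last := fun he => hi (by rw [he])
    simp [this]
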